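/- Consider a K-player game (K > 1) in which player k's action set is a nonempty compact interval 𝒰_k = [U_k^min, U_k^max] ⊂ ℝ and player k's cost J_k is twice continuously differentiable on an open set containing 𝒰 := 𝒰_1 × … × 𝒰_K, and suppose that for every k and every u ∈ 𝒰, ∂²J_k/∂u_k²(u) > Σ_{ℓ≠k} |∂²J_k/∂u_k∂u_ℓ(u)|. For each k, since u_k ↦ J_k(u_k, u_{-k}) is strictly convex, it has a unique minimizer on 𝒰_k; let Φ_k : 𝒰 → 𝒰 be the map that replaces the k-th coordinate of u by this minimizer (leaving the other coordinates unchanged), and let Φ := Φ_K ∘ Φ_{K−1} ∘ … ∘ Φ_1 be one round of sequential best responses. Then for every initial profile u⁰ ∈ 𝒰, the sequence u^{n+1} = Φ(u^n) converges to the unique pure Nash equilibrium of the game. -/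

import Mathlib

/-- Partial derivative of `f : (Fin K → ℝ) → ℝ` with respect to the `k`-th
coordinate, at the point `u`. -/
noncomputable def pd {K : ℕ} (k : Fin K) (f : (Fin K → ℝ) → ℝ)
    (u : Fin K → ℝ) : ℝ :=
  deriv (fun v => f (Function.update u k v)) (u k)

/-!
Fix the opponents' actions. Player `k`'s first-order optimality condition on its interval is a
variational inequality for `∂ₖJₖ`. Adding these inequalities at two profiles and expanding the
difference of `∂ₖJₖ` at the two updated profiles by the mean value theorem bounds the move of the
best response by `γ` times the sup-distance of the profiles, where `γ < 1` is the maximum over the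
compact box of `∑_{l ≠ k} |∂ₗ∂ₖJₖ| / ∂ₖ²Jₖ`. Hence one Gauss–Seidel sweep is a `γ`-contraction for
the sup-distance, and Banach's theorem gives a fixed point attracting every orbit. A fixed point
of the sweep is fixed by each `Φₖ`, i.e. is a Nash equilibrium; conversely, the same estimate
for two minimizers at the same profile shows that best responses are unique, so every Nash
equilibrium is a fixed point of the sweep.
-/

open Function Set Filter Topology NNReal

section PartialDerivative

variable {K : ℕ} {f : (Fin K → ℝ) → ℝ} {u : Fin K → ℝ} {k : Fin K}

theorem hasDerivAt_comp_update {x : ℝ} (hf : DifferentiableAt ℝ f (update u k x)) :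
    HasDerivAt (fun v => f (update u k v)) (fderiv ℝ f (update u k x) (Pi.single k 1)) x :=
  hf.hasFDerivAt.comp_hasDerivAt x (hasDerivAt_update u k x)

theorem pd_eq_fderiv_apply (hf : DifferentiableAt ℝ f u) :
    pd k f u = fderiv ℝ f u (Pi.single k 1) := by
  rw [← update_eq_self k u] at hf
  simpa [pd] using (hasDerivAt_comp_update hf).deriv

theorem hasDerivAt_comp_update_pd {x : ℝ} (hf : DifferentiableAt ℝ f (update u k x)) :
    HasDerivAt (fun v => f (update u k v)) (pd k f (update u k x)) x :=
  pd_eq_fderiv_apply hf ▸ hasDerivAt_comp_update hf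

theorem ContDiffOn.pd {m n : WithTop ℕ∞} {O : Set (Fin K → ℝ)} (hf : ContDiffOn ℝ n f O)
    (hO : IsOpen O) (hmn : m + 1 ≤ n) (k : Fin K) : ContDiffOn ℝ m (pd k f) O := by
  refine ((hf.fderiv_of_isOpen hO hmn).clm_apply
    (contDiffOn_const (c := Pi.single k 1))).congr fun u hu => ?_
  have hn : n ≠ 0 := (zero_lt_one.trans_le (le_add_self.trans hmn)).ne'
  exact pd_eq_fderiv_apply ((hf.differentiableOn hn).differentiableAt (hO.mem_nhds hu))

theorem exists_mem_segment_sub_eq_sum_pd {g : (Fin K → ℝ) → ℝ} {p p' : Fin K → ℝ}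
    (hg : ∀ q ∈ segment ℝ p' p, DifferentiableAt ℝ g q) :
    ∃ q ∈ segment ℝ p' p, g p - g p' = ∑ l, pd l g q * (p l - p' l) := by
  have hpath : ∀ t : ℝ, HasDerivAt (fun t : ℝ => p' + t • (p - p')) (p - p') t := fun t => by
    simpa using ((hasDerivAt_id t).smul_const (p - p')).const_add p'
  have hmem : ∀ t ∈ Icc (0 : ℝ) 1, p' + t • (p - p') ∈ segment ℝ p' p := fun t ht =>
    segment_eq_image' ℝ p' p ▸ mem_image_of_mem _ ht
  have hd : ∀ t ∈ Icc (0 : ℝ) 1, HasDerivAt (fun t => g (p' + t • (p - p')))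
      (fderiv ℝ g (p' + t • (p - p')) (p - p')) t := fun t ht =>
    (hg _ (hmem t ht)).hasFDerivAt.comp_hasDerivAt t (hpath t)
  obtain ⟨t, ht, hslope⟩ := exists_hasDerivAt_eq_slope _ _ one_pos
    (fun t ht => (hd t ht).continuousAt.continuousWithinAt)
    fun t ht => hd t (Ioo_subset_Icc_self ht)
  set q := p' + t • (p - p')
  refine ⟨q, hmem t (Ioo_subset_Icc_self ht), ?_⟩
  simp only [one_smul, add_sub_cancel, zero_smul, add_zero, sub_zero, div_one] at hslope
  calc g p - g p' = fderiv ℝ g q (∑ l, (p - p') l • Pi.single l 1) := by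
        rw [← pi_eq_sum_univ', hslope]
    _ = _ := by simp [pd_eq_fderiv_apply (hg q (hmem t (Ioo_subset_Icc_self ht))), mul_comm]

end PartialDerivative

theorem IsMinOn.hasDerivAt_mul_sub_nonneg {φ : ℝ → ℝ} {I : Set ℝ} {x y φ' : ℝ}
    (hmin : IsMinOn φ I x) (hI : Convex ℝ I) (hx : x ∈ I) (hy : y ∈ I)
    (hφ : HasDerivAt φ φ' x) :
    0 ≤ φ' * (y - x) := by
  simpa [mul_comm] using hmin.localize.hasFDerivWithinAt_nonneg hφ.hasFDerivAt.hasFDerivWithinAt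
    (sub_mem_posTangentConeAt_of_segment_subset (hI.segment_subset hx hy))

theorem abs_le_of_mul_add_mul_nonpos {a b c e : ℝ} (ha : 0 < a) (h : (a * e + b) * e ≤ 0)
    (hb : |b| ≤ a * c) : |e| ≤ c := by
  have hbe : -(b * e) ≤ a * c * |e| := by
    calc -(b * e) ≤ |b| * |e| := by rw [← abs_mul]; exact neg_le_abs _
      _ ≤ a * c * |e| := by gcongr
  have hae : a * |e| * |e| ≤ a * c * |e| := by
    rw [mul_assoc, abs_mul_abs_self]; linarith
  rcases (abs_nonneg e).eq_or_lt with he | he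
  · rw [← he]
    exact nonneg_of_mul_nonneg_right ((abs_nonneg b).trans hb) ha
  · exact le_of_mul_le_mul_left (le_of_mul_le_mul_right hae he) ha

theorem abs_sub_le_of_isMinOn_update {K : ℕ} {J : (Fin K → ℝ) → ℝ} {O S : Set (Fin K → ℝ)}
    {I : Set ℝ} {k : Fin K} {γ : ℝ} (hO : IsOpen O) (hJ : ContDiffOn ℝ 2 J O) (hSO : S ⊆ O)
    (hS : Convex ℝ S) (hI : Convex ℝ I) (hpos : ∀ q ∈ S, 0 < pd k (pd k J) q)
    (hdom : ∀ q ∈ S, ∑ l ∈ Finset.univ.erase k, |pd l (pd k J) q| ≤ γ * pd k (pd k J) q)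
    {u u' : Fin K → ℝ} {x x' : ℝ} (hx : x ∈ I) (hx' : x' ∈ I)
    (hp : update u k x ∈ S) (hp' : update u' k x' ∈ S)
    (hmin : IsMinOn (fun v => J (update u k v)) I x)
    (hmin' : IsMinOn (fun v => J (update u' k v)) I x') :
    |x - x'| ≤ γ * dist u u' := by
  set g := pd k J
  set p := update u k x
  set p' := update u' k x'
  have hJd : ∀ v ∈ O, DifferentiableAt ℝ J v := fun v hv =>
    (hJ.differentiableOn two_ne_zero).differentiableAt (hO.mem_nhds hv)
  have hgd : ∀ v ∈ O, DifferentiableAt ℝ g v := fun v hv =>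
    ((hJ.pd hO (by norm_num : (1 : WithTop ℕ∞) + 1 ≤ 2) k).differentiableOn
      one_ne_zero).differentiableAt (hO.mem_nhds hv)
  have hvi : 0 ≤ g p * (x' - x) :=
    hmin.hasDerivAt_mul_sub_nonneg hI hx hx' (hasDerivAt_comp_update_pd (hJd p (hSO hp)))
  have hvi' : 0 ≤ g p' * (x - x') :=
    hmin'.hasDerivAt_mul_sub_nonneg hI hx' hx (hasDerivAt_comp_update_pd (hJd p' (hSO hp')))
  obtain ⟨q, hq, hmvt⟩ := exists_mem_segment_sub_eq_sum_pd fun q hq =>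
    hgd q (hSO (hS.segment_subset hp' hp hq))
  replace hq : q ∈ S := hS.segment_subset hp' hp hq
  have hsplit : g p - g p' = pd k g q * (x - x')
      + ∑ l ∈ Finset.univ.erase k, pd l g q * (u l - u' l) := by
    rw [hmvt, ← Finset.add_sum_erase _ _ (Finset.mem_univ k)]
    congr 1
    · simp [p, p']
    · refine Finset.sum_congr rfl fun l hl => ?_
      simp [p, p', update_of_ne (Finset.ne_of_mem_erase hl)]
  have hcross : |∑ l ∈ Finset.univ.erase k, pd l g q * (u l - u' l)|
      ≤ pd k g q * (γ * dist u u') := by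
    calc _ ≤ ∑ l ∈ Finset.univ.erase k, |pd l g q| * dist u u' := by
          refine (Finset.abs_sum_le_sum_abs _ _).trans (Finset.sum_le_sum fun l _ => ?_)
          rw [abs_mul, ← Real.dist_eq]
          exact mul_le_mul_of_nonneg_left (dist_le_pi_dist u u' l) (abs_nonneg _)
      _ ≤ γ * pd k g q * dist u u' := by
          rw [← Finset.sum_mul]; exact mul_le_mul_of_nonneg_right (hdom q hq) dist_nonneg
      _ = _ := by ring
  refine abs_le_of_mul_add_mul_nonpos (hpos q hq) ?_ hcross
  rw [← hsplit]
  linarith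

section Sweep

variable {ι : Type*} {E : ι → Type*} {Φ : ι → (∀ i, E i) → ∀ i, E i} {S : Set (∀ i, E i)}

theorem mapsTo_foldl (hS : ∀ k, MapsTo (Φ k) S S) (L : List ι) :
    MapsTo (fun u => L.foldl (fun v k => Φ k v) u) S S := by
  induction L with
  | nil => exact mapsTo_id S
  | cons k L ih => exact fun u hu => ih (hS k hu)

theorem foldl_apply_of_notMem (hS : ∀ k, MapsTo (Φ k) S S)
    (hΦ : ∀ k, ∀ u ∈ S, ∀ l, l ≠ k → Φ k u l = u l) {L : List ι} {u : ∀ i, E i} (hu : u ∈ S)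
    {l : ι} (hl : l ∉ L) :
    L.foldl (fun v k => Φ k v) u l = u l := by
  induction L generalizing u with
  | nil => rfl
  | cons k L ih =>
    rw [List.mem_cons, not_or] at hl
    rw [List.foldl_cons, ih (hS k hu) hl.2, hΦ k u hu l hl.1]

theorem forall_eq_of_foldl_eq (hS : ∀ k, MapsTo (Φ k) S S)
    (hΦ : ∀ k, ∀ u ∈ S, ∀ l, l ≠ k → Φ k u l = u l) {L : List ι} (hL : L.Nodup)
    {u : ∀ i, E i} (hu : u ∈ S) (hfix : L.foldl (fun v k => Φ k v) u = u) : ∀ k ∈ L, Φ k u = u := by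
  induction L with
  | nil => simp
  | cons k L ih =>
    rw [List.nodup_cons] at hL
    rw [List.foldl_cons] at hfix
    -- `k ∉ L`, so the rest of the sweep leaves coordinate `k` of `Φ k u` untouched.
    have hk : Φ k u = u := by
      funext l
      by_cases hlk : l = k
      · subst hlk
        rw [← foldl_apply_of_notMem hS hΦ (hS l hu) hL.1, hfix]
      · exact hΦ k u hu l hlk
    rw [hk] at hfix
    simpa [hk] using ih hL.2 hfix

theorem dist_foldl_le [Fintype ι] [∀ i, PseudoMetricSpace (E i)]
    (hS : ∀ k, MapsTo (Φ k) S S)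
    (hΦ : ∀ k, ∀ u ∈ S, ∀ l, l ≠ k → Φ k u l = u l) {γ : ℝ≥0} (hγ : γ ≤ 1)
    (hlip : ∀ k, ∀ u ∈ S, ∀ u' ∈ S, dist (Φ k u k) (Φ k u' k) ≤ γ * dist u u')
    (L : List ι) {u u' : ∀ i, E i} (hu : u ∈ S) (hu' : u' ∈ S) {d : ℝ} (hd : dist u u' ≤ d) :
    dist (L.foldl (fun v k => Φ k v) u) (L.foldl (fun v k => Φ k v) u') ≤ d ∧
      ∀ l ∈ L,
        dist (L.foldl (fun v k => Φ k v) u l) (L.foldl (fun v k => Φ k v) u' l) ≤ γ * d := by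
  induction L generalizing u u' with
  | nil => simpa using hd
  | cons k L ih =>
    have hd0 : 0 ≤ d := dist_nonneg.trans hd
    have hk : dist (Φ k u k) (Φ k u' k) ≤ γ * d :=
      (hlip k u hu u' hu').trans (mul_le_mul_of_nonneg_left hd γ.2)
    have hstep : dist (Φ k u) (Φ k u') ≤ d := by
      refine (dist_pi_le_iff hd0).2 fun l => ?_
      by_cases hlk : l = k
      · subst hlk
        exact hk.trans (mul_le_of_le_one_left hd0 hγ)
      · rw [hΦ k u hu l hlk, hΦ k u' hu' l hlk]
        exact (dist_le_pi_dist u u' l).trans hd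
    obtain ⟨hdist, hcoord⟩ := ih (hS k hu) (hS k hu') hstep
    refine ⟨hdist, fun l hl => ?_⟩
    by_cases hlL : l ∈ L
    · exact hcoord l hlL
    · obtain rfl : l = k := (List.mem_cons.1 hl).resolve_right hlL
      simpa only [List.foldl_cons, foldl_apply_of_notMem hS hΦ (hS _ hu) hlL,
        foldl_apply_of_notMem hS hΦ (hS _ hu') hlL] using hk

theorem dist_foldl_le_mul [Fintype ι] [∀ i, PseudoMetricSpace (E i)]
    (hS : ∀ k, MapsTo (Φ k) S S)
    (hΦ : ∀ k, ∀ u ∈ S, ∀ l, l ≠ k → Φ k u l = u l) {γ : ℝ≥0} (hγ : γ ≤ 1)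
    (hlip : ∀ k, ∀ u ∈ S, ∀ u' ∈ S, dist (Φ k u k) (Φ k u' k) ≤ γ * dist u u')
    {L : List ι} (hL : ∀ l, l ∈ L) {u u' : ∀ i, E i} (hu : u ∈ S) (hu' : u' ∈ S) :
    dist (L.foldl (fun v k => Φ k v) u) (L.foldl (fun v k => Φ k v) u') ≤ γ * dist u u' :=
  (dist_pi_le_iff (by positivity)).2 fun l =>
    (dist_foldl_le hS hΦ hγ hlip L hu hu' le_rfl).2 l (hL l)

end Sweep

theorem exists_isFixedPt_tendsto_iterate {α : Type*} [MetricSpace α] {f : α → α} {s : Set α}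
    {K : ℝ≥0} (hsc : IsComplete s) (hs : s.Nonempty) (hsf : MapsTo f s s) (hK : K < 1)
    (hf : ∀ x ∈ s, ∀ y ∈ s, dist (f x) (f y) ≤ K * dist x y) :
    ∃ y ∈ s, (∀ z ∈ s, IsFixedPt f z ↔ z = y) ∧
      ∀ x ∈ s, Tendsto (fun n => f^[n] x) atTop (𝓝 y) := by
  have hcontr : ContractingWith K (hsf.restrict f s s) :=
    ⟨hK, LipschitzWith.of_dist_le_mul fun x y => hf x x.2 y y.2⟩
  have hunique : ∀ y ∈ s, ∀ z ∈ s, IsFixedPt f y → IsFixedPt f z → z = y :=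
    fun y hy z hz hfy hfz => congrArg Subtype.val
      (hcontr.fixedPoint_unique' (x := ⟨z, hz⟩) (y := ⟨y, hy⟩) (Subtype.ext hfz) (Subtype.ext hfy))
  obtain ⟨x₀, hx₀⟩ := hs
  obtain ⟨y, hy, hfy, -⟩ := hcontr.exists_fixedPoint' hsc hsf hx₀ (edist_ne_top _ _)
  refine ⟨y, hy, fun z hz => ⟨fun hfz => hunique y hy z hz hfy hfz, fun h => h ▸ hfy⟩,
    fun x hx => ?_⟩
  obtain ⟨y', hy', hfy', hlim, -⟩ := hcontr.exists_fixedPoint' hsc hsf hx (edist_ne_top _ _)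
  rwa [hunique y hy y' hy' hfy hfy'] at hlim

theorem exists_lt_one_forall_le {ι X : Type*} [Finite ι] [TopologicalSpace X] {S : Set X}
    (hS : IsCompact S) {f : ι → X → ℝ} (hf : ∀ i, ContinuousOn (f i) S)
    (hlt : ∀ i, ∀ x ∈ S, f i x < 1) : ∃ γ < 1, ∀ i, ∀ x ∈ S, f i x ≤ γ := by
  have hT : IsCompact (⋃ i, f i '' S) := isCompact_iUnion fun i => hS.image_of_continuousOn (hf i)
  refine ⟨sSup (⋃ i, f i '' S), ?_, fun i x hx =>
    le_csSup hT.bddAbove (mem_iUnion.2 ⟨i, mem_image_of_mem _ hx⟩)⟩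
  rcases (⋃ i, f i '' S).eq_empty_or_nonempty with h | h
  · simp [h]
  · obtain ⟨i, x, hx, hfx⟩ := mem_iUnion.1 (hT.sSup_mem h)
    exact hfx ▸ hlt i x hx

theorem exists_lt_one_sum_abs_pd_le_mul {K : ℕ} {J : Fin K → (Fin K → ℝ) → ℝ}
    {O S : Set (Fin K → ℝ)} (hO : IsOpen O) (hS : IsCompact S) (hSO : S ⊆ O)
    (hJ : ∀ k, ContDiffOn ℝ 2 (J k) O)
    (hdom : ∀ k, ∀ q ∈ S,
      ∑ l ∈ Finset.univ.erase k, |pd l (pd k (J k)) q| < pd k (pd k (J k)) q) :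
    ∃ γ : ℝ≥0, γ < 1 ∧ ∀ k, ∀ q ∈ S,
      ∑ l ∈ Finset.univ.erase k, |pd l (pd k (J k)) q| ≤ γ * pd k (pd k (J k)) q := by
  have hpos : ∀ k, ∀ q ∈ S, 0 < pd k (pd k (J k)) q := fun k q hq =>
    (Finset.sum_nonneg fun l _ => abs_nonneg _).trans_lt (hdom k q hq)
  have hcont : ∀ k l, ContinuousOn (pd l (pd k (J k))) S := fun k l =>
    (((hJ k).pd hO (by norm_num : (1 : WithTop ℕ∞) + 1 ≤ 2) k).pd hO (m := 0) (by norm_num)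
      l).continuousOn.mono hSO
  obtain ⟨γ, hγ1, hγ⟩ := exists_lt_one_forall_le hS
    (f := fun k q => (∑ l ∈ Finset.univ.erase k, |pd l (pd k (J k)) q|) / pd k (pd k (J k)) q)
    (fun k => (continuousOn_finsetSum _ fun l _ => (hcont k l).abs).div (hcont k k)
      fun q hq => (hpos k q hq).ne')
    fun k q hq => (div_lt_one (hpos k q hq)).2 (hdom k q hq)
  refine ⟨⟨max γ 0, le_max_right _ _⟩, max_lt hγ1 one_pos, fun k q hq => ?_⟩
  exact ((div_le_iff₀ (hpos k q hq)).1 (hγ k q hq)).trans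
    (mul_le_mul_of_nonneg_right (le_max_left _ _) (hpos k q hq).le)

theorem exists_lt_one_abs_sub_le_of_isMinOn_update {K : ℕ} {J : Fin K → (Fin K → ℝ) → ℝ}
    {O : Set (Fin K → ℝ)} {a b : Fin K → ℝ} (hO : IsOpen O)
    (hbox : univ.pi (fun k => Icc (a k) (b k)) ⊆ O) (hJ : ∀ k, ContDiffOn ℝ 2 (J k) O)
    (hdom : ∀ k, ∀ q ∈ univ.pi (fun k => Icc (a k) (b k)),
      ∑ l ∈ Finset.univ.erase k, |pd l (pd k (J k)) q| < pd k (pd k (J k)) q) :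
    ∃ γ : ℝ≥0, γ < 1 ∧ ∀ k, ∀ u ∈ univ.pi (fun k => Icc (a k) (b k)),
      ∀ u' ∈ univ.pi (fun k => Icc (a k) (b k)), ∀ x ∈ Icc (a k) (b k), ∀ x' ∈ Icc (a k) (b k),
      IsMinOn (fun v => J k (update u k v)) (Icc (a k) (b k)) x →
      IsMinOn (fun v => J k (update u' k v)) (Icc (a k) (b k)) x' →
      |x - x'| ≤ γ * dist u u' := by
  obtain ⟨γ, hγ1, hγ⟩ := exists_lt_one_sum_abs_pd_le_mul hO
    (isCompact_univ_pi fun k => isCompact_Icc) hbox hJ hdom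
  refine ⟨γ, hγ1, fun k u hu u' hu' x hx x' hx' =>
    abs_sub_le_of_isMinOn_update hO (hJ k) hbox (convex_pi fun k _ => convex_Icc _ _)
      (convex_Icc _ _) (fun q hq => ?_) (hγ k) hx hx'
      ((update_mem_pi_iff_of_mem hu).2 fun _ => hx) ((update_mem_pi_iff_of_mem hu').2 fun _ => hx')⟩
  exact (Finset.sum_nonneg fun l _ => abs_nonneg _).trans_lt (hdom k q hq)

theorem tendsto_sequential_best_response_general
    (K : ℕ)
    (Umin Umax : Fin K → ℝ) (hU : ∀ k, Umin k ≤ Umax k)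
    (J : Fin K → (Fin K → ℝ) → ℝ)
    (O : Set (Fin K → ℝ)) (hO : IsOpen O)
    (hUO : (Set.univ.pi fun k => Set.Icc (Umin k) (Umax k)) ⊆ O)
    (hsmooth : ∀ k, ContDiffOn ℝ 2 (J k) O)
    (hdom : ∀ k, ∀ u ∈ Set.univ.pi fun k => Set.Icc (Umin k) (Umax k),
      ∑ l ∈ Finset.univ.erase k, |pd l (pd k (J k)) u| < pd k (pd k (J k)) u)
    (Φ : Fin K → (Fin K → ℝ) → (Fin K → ℝ))
    (hΦ : ∀ k, ∀ u ∈ Set.univ.pi fun k => Set.Icc (Umin k) (Umax k),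
      (∀ l, l ≠ k → Φ k u l = u l) ∧
      Φ k u k ∈ Set.Icc (Umin k) (Umax k) ∧
      ∀ v ∈ Set.Icc (Umin k) (Umax k),
        J k (Φ k u) ≤ J k (Function.update u k v)) :
    ∃ ustar : Fin K → ℝ,
      (ustar ∈ (Set.univ.pi fun k => Set.Icc (Umin k) (Umax k)) ∧
        ∀ k, ∀ v ∈ Set.Icc (Umin k) (Umax k),
          J k ustar ≤ J k (Function.update ustar k v)) ∧
      (∀ w ∈ Set.univ.pi fun k => Set.Icc (Umin k) (Umax k),
        (∀ k, ∀ v ∈ Set.Icc (Umin k) (Umax k),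
          J k w ≤ J k (Function.update w k v)) → w = ustar) ∧
      ∀ u0 ∈ Set.univ.pi fun k => Set.Icc (Umin k) (Umax k),
        Filter.Tendsto
          (fun n => (fun u => (List.finRange K).foldl (fun v k => Φ k v) u)^[n] u0)
          Filter.atTop (nhds ustar) := by
  set S := Set.univ.pi fun k => Set.Icc (Umin k) (Umax k)
  have hΦ_ne : ∀ k, ∀ u ∈ S, ∀ l, l ≠ k → Φ k u l = u l := fun k u hu => (hΦ k u hu).1
  have hupdate : ∀ k, ∀ u ∈ S, Φ k u = update u k (Φ k u k) := fun k u hu =>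
    (update_eq_iff.2 ⟨rfl, fun l hl => (hΦ_ne k u hu l hl).symm⟩).symm
  have hΦS : ∀ k, MapsTo (Φ k) S S := fun k u hu =>
    hupdate k u hu ▸ (update_mem_pi_iff_of_mem hu).2 fun _ => (hΦ k u hu).2.1
  have hmin : ∀ k, ∀ u ∈ S,
      IsMinOn (fun v => J k (update u k v)) (Icc (Umin k) (Umax k)) (Φ k u k) :=
    fun k u hu => isMinOn_iff.2 fun v hv => hupdate k u hu ▸ (hΦ k u hu).2.2 v hv
  obtain ⟨γ, hγ1, hlip⟩ := exists_lt_one_abs_sub_le_of_isMinOn_update hO hUO hsmooth hdom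
  obtain ⟨ustar, hustar, hfix, hconv⟩ := exists_isFixedPt_tendsto_iterate
    (isCompact_univ_pi fun k => isCompact_Icc).isComplete ⟨Umin, fun k _ => ⟨le_rfl, hU k⟩⟩
    (mapsTo_foldl hΦS _) hγ1 fun u hu u' hu' =>
      dist_foldl_le_mul hΦS hΦ_ne hγ1.le (fun k u hu u' hu' => (Real.dist_eq _ _).trans_le
        (hlip k u hu u' hu' _ (hΦ k u hu).2.1 _ (hΦ k u' hu').2.1 (hmin k u hu) (hmin k u' hu')))
        List.mem_finRange hu hu'
  have hΦustar : ∀ k, Φ k ustar = ustar := fun k =>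
    forall_eq_of_foldl_eq hΦS hΦ_ne (List.nodup_finRange K) hustar ((hfix ustar hustar).2 rfl) k
      (List.mem_finRange k)
  refine ⟨ustar, ⟨hustar, fun k v hv => by
    simpa only [hΦustar k] using (hΦ k ustar hustar).2.2 v hv⟩,
    fun w hw hnash => (hfix w hw).1 (List.foldl_fixed' (fun k => ?_) _), hconv⟩
  have hwk := hlip k w hw w hw _ (hΦ k w hw).2.1 _ (hw k trivial) (hmin k w hw)
    (isMinOn_iff.2 fun v hv => by simpa using hnash k v hv)
  rw [dist_self, mul_zero, abs_nonpos_iff, sub_eq_zero] at hwk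
  rw [hupdate k w hw, hwk, update_eq_self]

/-- Under strict diagonal dominance of the second derivatives of the costs,
the sequential best-response dynamics `u^{n+1} = Φ_K ∘ ⋯ ∘ Φ_1 (u^n)` (where
`Φ_k` replaces the `k`-th coordinate by the unique minimizer of the own cost)
converges, from any initial profile in the product of the action intervals, to
the unique pure Nash equilibrium of the game. -/
theorem tendsto_sequential_best_response
    (K : ℕ) (hK : 1 < K)
    (Umin Umax : Fin K → ℝ) (hU : ∀ k, Umin k ≤ Umax k)
    (J : Fin K → (Fin K → ℝ) → ℝ)
    (O : Set (Fin K → ℝ)) (hO : IsOpen O)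
    (hUO : (Set.univ.pi fun k => Set.Icc (Umin k) (Umax k)) ⊆ O)
    (hsmooth : ∀ k, ContDiffOn ℝ 2 (J k) O)
    (hdom : ∀ k, ∀ u ∈ Set.univ.pi fun k => Set.Icc (Umin k) (Umax k),
      ∑ l ∈ Finset.univ.erase k, |pd l (pd k (J k)) u| < pd k (pd k (J k)) u)
    (Φ : Fin K → (Fin K → ℝ) → (Fin K → ℝ))
    (hΦ : ∀ k, ∀ u ∈ Set.univ.pi fun k => Set.Icc (Umin k) (Umax k),
      (∀ l, l ≠ k → Φ k u l = u l) ∧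
      Φ k u k ∈ Set.Icc (Umin k) (Umax k) ∧
      ∀ v ∈ Set.Icc (Umin k) (Umax k),
        J k (Φ k u) ≤ J k (Function.update u k v)) :
    ∃ ustar : Fin K → ℝ,
      (ustar ∈ (Set.univ.pi fun k => Set.Icc (Umin k) (Umax k)) ∧
        ∀ k, ∀ v ∈ Set.Icc (Umin k) (Umax k),
          J k ustar ≤ J k (Function.update ustar k v)) ∧
      (∀ w ∈ Set.univ.pi fun k => Set.Icc (Umin k) (Umax k),
        (∀ k, ∀ v ∈ Set.Icc (Umin k) (Umax k),
          J k w ≤ J k (Function.update w k v)) → w = ustar) ∧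
      ∀ u0 ∈ Set.univ.pi fun k => Set.Icc (Umin k) (Umax k),
        Filter.Tendsto
          (fun n => (fun u => (List.finRange K).foldl (fun v k => Φ k v) u)^[n] u0)
          Filter.atTop (nhds ustar) :=
  tendsto_sequential_best_response_general K Umin Umax hU J O hO hUO hsmooth hdom Φ hΦ
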